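/- arXiv:2304.02240 — 3 statements merged into one kernel-verified Lean document; each statement's English description precedes it below -/
import Mathlib

section
/- Let d ∈ ℕ, d ≥ 1, and let h_t : [0,1]ᵈ → {0,1} be threshold functions as above. Let α = (d−1)/d, and let s, t ∈ [α,1]ᵈ with s_{i₀} = α and t_{i₀} = 1 for some i₀ ∈ [d]. Let err(h,h') = Pr_{x ∼ Unif([0,1]ᵈ)}[h(x) ≠ h'(x)]. Then err(h_s, h_t) > 1/(4d). -/
open MeasureTheory

/-- The uniform distribution on the cube `[0,1]^d`. -/
noncomputable def unifCube (d : ℕ) : Measure (Fin d → ℝ) :=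
  Measure.pi fun _ => (volume : Measure ℝ).restrict (Set.Icc 0 1)

/-- The threshold hypothesis `h_t(x) = 1` iff `x i ≤ t i` for all `i`. -/
noncomputable def hThr {d : ℕ} (t x : Fin d → ℝ) : Bool :=
  decide (∀ i, x i ≤ t i)

lemma aux_pow (d : ℕ) (hd : 1 ≤ d) : (1:ℝ)/4 < (((d:ℝ) - 1)/d)^(d-1) := by
  rcases eq_or_lt_of_le hd with h | h
  · subst h; norm_num
  · obtain ⟨n, rfl⟩ : ∃ n, d = n + 1 := ⟨d - 1, (Nat.succ_pred_eq_of_pos (by omega)).symm⟩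
    have hn : 1 ≤ n := by omega
    have hnpos : (0:ℝ) < n := by exact_mod_cast hn
    have hcast : ((n + 1 : ℕ):ℝ) - 1 = (n:ℝ) := by push_cast; ring
    rw [hcast, Nat.add_sub_cancel]
    have hX : ((n:ℝ) + 1)/n ≤ Real.exp (1/n) := by
      have h1 : ((n:ℝ)+1)/n = 1/n + 1 := by field_simp; ring
      rw [h1]; exact Real.add_one_le_exp _
    have hXn : (((n:ℝ) + 1)/n)^n ≤ Real.exp 1 := by
      calc (((n:ℝ) + 1)/n)^n ≤ (Real.exp (1/n))^n := by
            apply pow_le_pow_left₀ (by positivity) hX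
        _ = Real.exp 1 := by
            rw [← Real.exp_nat_mul]; congr 1; field_simp
    have h4 : (((n:ℝ) + 1)/n)^n < 4 := lt_of_le_of_lt hXn (by
      have := Real.exp_one_lt_d9; linarith)
    have hpos : (0:ℝ) < (((n:ℝ) + 1)/n)^n := by positivity
    have : ((n:ℝ)/((n:ℝ)+1))^n = 1/((((n:ℝ) + 1)/n)^n) := by
      rw [div_pow, div_pow, one_div_div]
    push_cast
    rw [this]
    rw [div_lt_div_iff₀ (by norm_num) hpos]
    linarith

theorem stmt14 (d : ℕ) (hd : 1 ≤ d) (i₀ : Fin d) (s t : Fin d → ℝ)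
    (hs : ∀ i, s i ∈ Set.Icc (((d : ℝ) - 1) / d) 1)
    (ht : ∀ i, t i ∈ Set.Icc (((d : ℝ) - 1) / d) 1)
    (hsi : s i₀ = ((d : ℝ) - 1) / d) (hti : t i₀ = 1) :
    (unifCube d {x | hThr s x ≠ hThr t x}).toReal > 1 / (4 * d) := by
  have hdpos : (0:ℝ) < d := by exact_mod_cast hd
  set α : ℝ := ((d:ℝ) - 1)/d with hαdef
  have hα0 : 0 ≤ α := div_nonneg (by linarith [show (1:ℝ) ≤ d from by exact_mod_cast hd]) hdpos.le
  have hα1 : α < 1 := by rw [hαdef, div_lt_one hdpos]; linarith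
  set I : Fin d → Set ℝ := fun i => if i = i₀ then Set.Ioc α 1 else Set.Icc 0 (min (s i) (t i))
    with hIdef
  set g : Fin d → ℝ := fun i => if i = i₀ then 1 - α else min (s i) (t i) with hgdef
  have hg0 : ∀ i, 0 ≤ g i := by
    intro i
    by_cases h : i = i₀
    · simp only [hgdef, if_pos h]; linarith
    · simp only [hgdef, if_neg h]
      exact le_min (le_trans hα0 (hs i).1) (le_trans hα0 (ht i).1)
  -- subset
  have hsub : Set.univ.pi I ⊆ {x | hThr s x ≠ hThr t x} := by
    intro x hx
    have hmem : ∀ i, x i ∈ I i := fun i => hx i (Set.mem_univ i)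
    have hi0 := hmem i₀
    simp only [hIdef, if_pos rfl] at hi0
    have hxt : ∀ i, x i ≤ t i := by
      intro i
      by_cases h : i = i₀
      · subst h; rw [hti]; exact hi0.2
      · have := hmem i; simp only [hIdef, if_neg h] at this
        exact this.2.trans (min_le_right _ _)
    have hxs : ¬ (∀ i, x i ≤ s i) := by
      intro hcon
      have := hcon i₀
      rw [hsi] at this
      exact absurd hi0.1 (not_lt.mpr this)
    simp only [Set.mem_setOf_eq, hThr, ne_eq, decide_eq_decide]
    intro hiff
    exact hxs (hiff.mpr hxt)
  -- measure of the box
  have hfac : ∀ i, (volume.restrict (Set.Icc 0 1)) (I i) = ENNReal.ofReal (g i) := by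
    intro i
    by_cases h : i = i₀
    · simp only [hIdef, hgdef, if_pos h]
      rw [Measure.restrict_apply measurableSet_Ioc,
        Set.inter_eq_left.mpr (Set.Ioc_subset_Icc_self.trans (Set.Icc_subset_Icc hα0 le_rfl)), Real.volume_Ioc]
    · have hm1 : min (s i) (t i) ≤ 1 := le_trans (min_le_left _ _) (hs i).2
      simp only [hIdef, hgdef, if_neg h]
      rw [Measure.restrict_apply measurableSet_Icc,
        Set.inter_eq_left.mpr (Set.Icc_subset_Icc le_rfl hm1), Real.volume_Icc, sub_zero]
  have hbox : unifCube d (Set.univ.pi I) = ENNReal.ofReal (∏ i, g i) := by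
    rw [unifCube, Measure.pi_pi]
    calc ∏ i, (volume.restrict (Set.Icc 0 1)) (I i)
        = ∏ i, ENNReal.ofReal (g i) := Finset.prod_congr rfl (fun i _ => hfac i)
      _ = ENNReal.ofReal (∏ i, g i) := (ENNReal.ofReal_prod_of_nonneg (fun i _ => hg0 i)).symm
  -- total mass is 1
  have huniv : unifCube d Set.univ = 1 := by
    rw [unifCube, Measure.pi_univ]
    simp [Real.volume_Icc]
  have hne : unifCube d {x | hThr s x ≠ hThr t x} ≠ ⊤ := by
    have := measure_mono (μ := unifCube d) (Set.subset_univ {x | hThr s x ≠ hThr t x})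
    rw [huniv] at this
    exact ne_top_of_le_ne_top ENNReal.one_ne_top this
  have hmono : (unifCube d (Set.univ.pi I)).toReal
      ≤ (unifCube d {x | hThr s x ≠ hThr t x}).toReal :=
    ENNReal.toReal_mono hne (measure_mono hsub)
  rw [hbox, ENNReal.toReal_ofReal (Finset.prod_nonneg (fun i _ => hg0 i))] at hmono
  -- lower bound the product
  have hsplit : ∏ i, g i = g i₀ * ∏ i ∈ Finset.univ.erase i₀, g i :=
    (Finset.mul_prod_erase Finset.univ g (Finset.mem_univ i₀)).symm
  have hP : α^(d-1) ≤ ∏ i ∈ Finset.univ.erase i₀, g i := by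
    have hcard : (Finset.univ.erase i₀).card = d - 1 := by
      rw [Finset.card_erase_of_mem (Finset.mem_univ i₀), Finset.card_univ, Fintype.card_fin]
    calc α^(d-1) = ∏ _i ∈ Finset.univ.erase i₀, α := by rw [Finset.prod_const, hcard]
      _ ≤ ∏ i ∈ Finset.univ.erase i₀, g i := by
          apply Finset.prod_le_prod (fun i _ => hα0)
          intro i hi
          have h : i ≠ i₀ := Finset.ne_of_mem_erase hi
          simp only [hgdef, if_neg h]
          exact le_min (hs i).1 (ht i).1
  have hgi0 : g i₀ = 1/d := by
    simp only [hgdef, if_pos rfl, hαdef]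
    field_simp
    ring
  have haux := aux_pow d hd
  have hfinal : 1/(4*(d:ℝ)) < ∏ i, g i := by
    rw [hsplit, hgi0]
    have h1 : 1/(4*(d:ℝ)) = (1/d) * (1/4) := by field_simp
    rw [h1]
    apply mul_lt_mul_of_pos_left _ (by positivity)
    exact lt_of_lt_of_le haux hP
  linarith
end

section
/- Let d ∈ ℕ, d ≥ 1, α = (d−1)/d, and ε ≤ 1/(8d). Let s, t ∈ [α,1]ᵈ with s_{i₀} = α and t_{i₀} = 1 for some coordinate i₀. Define err(h,h') = Pr_{x ∼ Unif([0,1]ᵈ)}[h(x) ≠ h'(x)] for threshold hypotheses. Then there is no r ∈ [0,1]ᵈ such that both err(h_s, h_r) ≤ ε and err(h_t, h_r) ≤ ε. -/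
open MeasureTheory

lemma restrictIcc_prob : IsProbabilityMeasure ((volume : Measure ℝ).restrict (Set.Icc (0:ℝ) 1)) := by
  constructor
  rw [Measure.restrict_apply_univ]
  simp [Real.volume_Icc]

lemma pow_bound (d : ℕ) (hd : 1 ≤ d) : (1/4 : ℝ) < (((d:ℝ)-1)/d)^(d-1) := by
  rcases eq_or_lt_of_le hd with h1 | h2
  · rw [← h1]; norm_num
  · have hd2 : 2 ≤ d := h2
    have hd1 : (1:ℝ) ≤ (d:ℝ) - 1 := by
      have : (2:ℝ) ≤ d := by exact_mod_cast hd2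
      linarith
    have hdpos : (0:ℝ) < d := by positivity
    have hkey : Real.exp (-(1/((d:ℝ)-1))) ≤ ((d:ℝ)-1)/d := by
      rw [Real.exp_neg]
      rw [inv_le_iff_one_le_mul₀ (Real.exp_pos _)]
      have h := Real.add_one_le_exp (1/((d:ℝ)-1))
      have h2' : (d:ℝ)/((d:ℝ)-1) ≤ Real.exp (1/((d:ℝ)-1)) := by
        have : (d:ℝ)/((d:ℝ)-1) = 1/((d:ℝ)-1) + 1 := by field_simp; ring
        linarith [this ▸ h]
      calc (1:ℝ) = (((d:ℝ)-1)/d) * ((d:ℝ)/((d:ℝ)-1)) := by field_simp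
        _ ≤ (((d:ℝ)-1)/d) * Real.exp (1/((d:ℝ)-1)) := by
            apply mul_le_mul_of_nonneg_left h2'
            positivity
    have hpow : Real.exp (-(1/((d:ℝ)-1)))^(d-1) ≤ (((d:ℝ)-1)/d)^(d-1) :=
      pow_le_pow_left₀ (Real.exp_nonneg _) hkey _
    have hexp : Real.exp (-(1/((d:ℝ)-1)))^(d-1) = Real.exp (-1) := by
      rw [← Real.exp_nat_mul]
      congr 1
      have hne : ((d:ℝ)-1) ≠ 0 := by linarith
      have hcast : ((d-1 : ℕ) : ℝ) = (d:ℝ) - 1 := by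
        have := Nat.cast_sub hd (R := ℝ); simpa using this
      rw [hcast]; field_simp
    have : (1/4:ℝ) < Real.exp (-1) := by
      rw [Real.exp_neg]
      have h4 : Real.exp 1 < 4 := by
        have := Real.exp_one_lt_d9; linarith
      have := inv_strictAnti₀ (Real.exp_pos 1) h4
      simpa [one_div] using this
    linarith [hexp ▸ hpow]

theorem stmt15 (d : ℕ) (hd : 1 ≤ d) (ε : ℝ) (hε : ε ≤ 1 / (8 * d))
    (i₀ : Fin d) (s t : Fin d → ℝ)
    (hs : ∀ i, s i ∈ Set.Icc (((d : ℝ) - 1) / d) 1)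
    (ht : ∀ i, t i ∈ Set.Icc (((d : ℝ) - 1) / d) 1)
    (hsi : s i₀ = ((d : ℝ) - 1) / d) (hti : t i₀ = 1) :
    ¬ ∃ r : Fin d → ℝ, (∀ i, r i ∈ Set.Icc (0 : ℝ) 1) ∧
        (unifCube d {x | hThr s x ≠ hThr r x}).toReal ≤ ε ∧
        (unifCube d {x | hThr t x ≠ hThr r x}).toReal ≤ ε := by
  rintro ⟨r, hr, h1, h2⟩
  haveI : ∀ i : Fin d, IsProbabilityMeasure ((volume : Measure ℝ).restrict (Set.Icc (0:ℝ) 1)) :=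
    fun _ => restrictIcc_prob
  haveI : IsProbabilityMeasure (unifCube d) := by
    unfold unifCube; infer_instance
  set α : ℝ := ((d : ℝ) - 1) / d with hα
  have hdpos : (0:ℝ) < d := by exact_mod_cast hd
  have hd1R : (1:ℝ) ≤ d := by exact_mod_cast hd
  have hα0 : 0 ≤ α := div_nonneg (by linarith) hdpos.le
  have hα1 : α ≤ 1 := by
    rw [hα]; exact (div_le_one hdpos).mpr (by linarith)
  -- the set B
  set S : Fin d → Set ℝ := fun i => if i = i₀ then Set.Ioc α 1 else Set.Iic (t i) with hS
  set B : Set (Fin d → ℝ) := Set.pi Set.univ S with hB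
  -- B ⊆ {hThr s ≠ hThr t}
  have hBsub : B ⊆ {x | hThr s x ≠ hThr t x} := by
    intro x hx
    have hx0 : x i₀ ∈ Set.Ioc α 1 := by
      have := hx i₀ (Set.mem_univ _); simpa [hS] using this
    have hxt : ∀ i, x i ≤ t i := by
      intro i
      by_cases h : i = i₀
      · subst h; rw [hti]; exact hx0.2
      · have := hx i (Set.mem_univ _); simpa [hS, h] using this
    have hxs : ¬ (∀ i, x i ≤ s i) := by
      intro hc
      have := hc i₀
      rw [hsi] at this
      exact absurd this (not_le.mpr hx0.1)
    simp only [Set.mem_setOf_eq, hThr]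
    simp [hxs, hxt]
  -- triangle: {hThr s ≠ hThr t} ⊆ union
  have htri : {x | hThr s x ≠ hThr t x} ⊆
      {x | hThr s x ≠ hThr r x} ∪ {x | hThr t x ≠ hThr r x} := by
    intro x hx
    by_contra hc
    simp only [Set.mem_union, Set.mem_setOf_eq, not_or, not_not] at hc
    exact hx (hc.1.trans hc.2.symm)
  -- measure of B
  have hc : ∀ i, t i ≤ 1 := fun i => (ht i).2
  have hc0 : ∀ i, α ≤ t i := fun i => (ht i).1
  have hμB : (unifCube d B).toReal = ∏ i, (if i = i₀ then 1 - α else t i) := by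
    rw [hB, unifCube, Measure.pi_pi]
    have heach : ∀ i, ((volume : Measure ℝ).restrict (Set.Icc (0:ℝ) 1)) (S i)
        = ENNReal.ofReal (if i = i₀ then 1 - α else t i) := by
      intro i
      by_cases h : i = i₀
      · subst h
        simp only [hS, if_true]
        rw [Measure.restrict_apply measurableSet_Ioc]
        have : Set.Ioc α 1 ∩ Set.Icc (0:ℝ) 1 = Set.Ioc α 1 := by
          apply Set.inter_eq_self_of_subset_left
          intro y hy
          exact ⟨le_trans hα0 hy.1.le, hy.2⟩
        rw [this, Real.volume_Ioc]
      · simp only [hS]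
        rw [if_neg h, if_neg h, Measure.restrict_apply measurableSet_Iic]
        have : Set.Iic (t i) ∩ Set.Icc (0:ℝ) 1 = Set.Icc 0 (t i) := by
          ext y
          simp only [Set.mem_inter_iff, Set.mem_Iic, Set.mem_Icc]
          constructor
          · rintro ⟨hy1, hy2, hy3⟩; exact ⟨hy2, hy1⟩
          · rintro ⟨hy1, hy2⟩; exact ⟨hy2, hy1, le_trans hy2 (hc i)⟩
        rw [this, Real.volume_Icc, sub_zero]
    simp only [heach]
    rw [← ENNReal.ofReal_prod_of_nonneg]
    · rw [ENNReal.toReal_ofReal]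
      apply Finset.prod_nonneg
      intro i _
      by_cases h : i = i₀
      · rw [if_pos h]; linarith [hα1]
      · rw [if_neg h]; linarith [hα0, hc0 i]
    · intro i _
      by_cases h : i = i₀
      · rw [if_pos h]; linarith [hα1]
      · rw [if_neg h]; linarith [hα0, hc0 i]
  -- lower bound on the product
  have hprodlb : (1/(d:ℝ)) * α^(d-1) ≤ ∏ i, (if i = i₀ then 1 - α else t i) := by
    rw [← Finset.mul_prod_erase Finset.univ _ (Finset.mem_univ i₀), if_pos rfl]
    have h1α : (1:ℝ)/(d:ℝ) = 1 - α := by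
      rw [hα]; field_simp; ring
    rw [h1α]
    apply mul_le_mul_of_nonneg_left _ (by linarith)
    calc α^(d-1) = ∏ _i ∈ Finset.univ.erase i₀, α := by
          rw [Finset.prod_const]
          congr 1
          rw [Finset.card_erase_of_mem (Finset.mem_univ _), Finset.card_univ, Fintype.card_fin]
      _ ≤ ∏ i ∈ Finset.univ.erase i₀, (if i = i₀ then 1 - α else t i) := by
          apply Finset.prod_le_prod
          · intro i _; exact hα0
          · intro i hi
            rw [if_neg (Finset.ne_of_mem_erase hi)]
            exact hc0 i
  -- put together
  have hmono : unifCube d B ≤ unifCube d {x | hThr s x ≠ hThr r x}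
      + unifCube d {x | hThr t x ≠ hThr r x} :=
    le_trans (measure_mono (hBsub.trans htri)) (measure_union_le _ _)
  have hfin1 : unifCube d {x | hThr s x ≠ hThr r x} ≠ ⊤ := measure_ne_top _ _
  have hfin2 : unifCube d {x | hThr t x ≠ hThr r x} ≠ ⊤ := measure_ne_top _ _
  have hreal : (unifCube d B).toReal ≤
      (unifCube d {x | hThr s x ≠ hThr r x}).toReal
      + (unifCube d {x | hThr t x ≠ hThr r x}).toReal := by
    rw [← ENNReal.toReal_add hfin1 hfin2]
    exact ENNReal.toReal_mono (by simp [ENNReal.add_ne_top, hfin1, hfin2]) hmono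
  have hlast : (1/(d:ℝ)) * α^(d-1) ≤ 2 * ε := by
    rw [hμB] at hreal
    linarith
  have hεb : 2 * ε ≤ 1/(4*(d:ℝ)) := by
    have h48 : (2:ℝ) * (1/(8*(d:ℝ))) = 1/(4*(d:ℝ)) := by
      field_simp; ring
    linarith
  have hpb := pow_bound d hd
  rw [← hα] at hpb
  have h14 : 1/(4*(d:ℝ)) < (1/(d:ℝ)) * α^(d-1) := by
    calc 1/(4*(d:ℝ)) = (1/(d:ℝ)) * (1/4) := by field_simp
      _ < (1/(d:ℝ)) * α^(d-1) :=
        mul_lt_mul_of_pos_left hpb (by positivity)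
  linarith
end

section
/- Suppose A is a randomized estimator such that for every bias b in a finite sequence b₁ < b₂ < ⋯ < b_m ⊆ [0,1], A on n i.i.d. Bern(b_i) samples outputs a canonical value v_i with probability at least 2/3. If b_{i+1} − b_i ≤ η for each i with nη < 1/3, then v_i = v_{i+1} for all i; consequently all v_i are equal. -/
open MeasureTheory ENNReal

/-- The Bernoulli distribution on `Bool` with success probability `p`. -/
noncomputable def bern (p : ℝ) : Measure Bool :=
  ENNReal.ofReal p • Measure.dirac true + ENNReal.ofReal (1 - p) • Measure.dirac false

/-- The distribution of `n` i.i.d. tosses of a coin with bias `p`. -/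
noncomputable def bernPow (p : ℝ) (n : ℕ) : Measure (Fin n → Bool) :=
  Measure.pi fun _ => bern p

private lemma sum_mul_sub_le {ι : Type*} [Fintype ι] (a b c : ι → ℝ)
    (hc0 : ∀ s, 0 ≤ c s) (hc1 : ∀ s, c s ≤ 1)
    (hab : ∑ s, a s = ∑ s, b s) :
    ∑ s, a s * c s - ∑ s, b s * c s ≤ (∑ s, |a s - b s|) / 2 := by
  have h1 : ∀ s, a s * c s - b s * c s ≤ (|a s - b s| + (a s - b s)) / 2 := by
    intro s
    rw [← sub_mul]
    rcases le_or_gt 0 (a s - b s) with h | h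
    · calc (a s - b s) * c s ≤ (a s - b s) * 1 :=
            mul_le_mul_of_nonneg_left (hc1 s) h
        _ = (|a s - b s| + (a s - b s)) / 2 := by rw [abs_of_nonneg h]; ring
    · calc (a s - b s) * c s ≤ 0 := mul_nonpos_of_nonpos_of_nonneg h.le (hc0 s)
        _ = (|a s - b s| + (a s - b s)) / 2 := by rw [abs_of_neg h]; ring
  calc ∑ s, a s * c s - ∑ s, b s * c s = ∑ s, (a s * c s - b s * c s) := by
        rw [Finset.sum_sub_distrib]
    _ ≤ ∑ s, (|a s - b s| + (a s - b s)) / 2 := Finset.sum_le_sum fun s _ => h1 s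
    _ = (∑ s, |a s - b s|) / 2 := by
        rw [← Finset.sum_div, Finset.sum_add_distrib, Finset.sum_sub_distrib, hab]
        ring

private lemma sum_abs_prod_le (f g : Bool → ℝ) (hf : ∀ x, 0 ≤ f x) (hg : ∀ x, 0 ≤ g x)
    (hf1 : ∑ x, f x = 1) (hg1 : ∑ x, g x = 1) (n : ℕ) :
    ∑ t : Fin n → Bool, |(∏ i, f (t i)) - ∏ i, g (t i)| ≤ n * ∑ x, |f x - g x| := by
  induction n with
  | zero => simp
  | succ n ih =>
    have key : (∑ x : Bool, ∑ t : Fin n → Bool,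
            |f x * ∏ i, f (t i) - g x * ∏ i, g (t i)|)
        = ∑ t : Fin (n+1) → Bool, |(∏ i, f (t i)) - ∏ i, g (t i)| := by
      rw [show (∑ x : Bool, ∑ t : Fin n → Bool,
            |f x * ∏ i, f (t i) - g x * ∏ i, g (t i)|)
          = ∑ p : Bool × (Fin n → Bool),
              |f p.1 * ∏ i, f (p.2 i) - g p.1 * ∏ i, g (p.2 i)|
          from (Fintype.sum_prod_type (f := fun p : Bool × (Fin n → Bool) =>
            |f p.1 * ∏ i, f (p.2 i) - g p.1 * ∏ i, g (p.2 i)|)).symm]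
      refine Fintype.sum_equiv (Fin.consEquiv fun _ => Bool) _ _ ?_
      intro p
      obtain ⟨x, t⟩ := p
      have hf' : ∀ i, f ((Fin.consEquiv fun _ => Bool) (x, t) i)
          = Fin.cons (α := fun _ => ℝ) (f x) (f ∘ t) i := by
        intro i
        show (f ∘ Fin.cons x t) i = _
        rw [Fin.comp_cons]
      have hg' : ∀ i, g ((Fin.consEquiv fun _ => Bool) (x, t) i)
          = Fin.cons (α := fun _ => ℝ) (g x) (g ∘ t) i := by
        intro i
        show (g ∘ Fin.cons x t) i = _
        rw [Fin.comp_cons]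
      simp only [Finset.prod_congr rfl fun i _ => hf' i,
        Finset.prod_congr rfl fun i _ => hg' i, Fin.prod_cons]
      rfl
    have hsumf : ∑ t : Fin n → Bool, ∏ i, f (t i) = 1 := by
      rw [← Fintype.sum_pow f n, hf1, one_pow]
    rw [← key]
    have hbound : ∀ x : Bool, ∀ t : Fin n → Bool,
        |f x * ∏ i, f (t i) - g x * ∏ i, g (t i)|
          ≤ |f x - g x| * (∏ i, f (t i)) + g x * |(∏ i, f (t i)) - ∏ i, g (t i)| := by
      intro x t
      have hP : (0:ℝ) ≤ ∏ i, f (t i) := Finset.prod_nonneg fun i _ => hf (t i)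
      calc |f x * ∏ i, f (t i) - g x * ∏ i, g (t i)|
          = |(f x - g x) * (∏ i, f (t i)) + g x * ((∏ i, f (t i)) - ∏ i, g (t i))| := by
            ring_nf
        _ ≤ |(f x - g x) * (∏ i, f (t i))| + |g x * ((∏ i, f (t i)) - ∏ i, g (t i))| :=
            abs_add_le _ _
        _ = |f x - g x| * (∏ i, f (t i)) + g x * |(∏ i, f (t i)) - ∏ i, g (t i)| := by
            rw [abs_mul, abs_mul, abs_of_nonneg hP, abs_of_nonneg (hg x)]
    calc ∑ x : Bool, ∑ t : Fin n → Bool, |f x * ∏ i, f (t i) - g x * ∏ i, g (t i)|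
        ≤ ∑ x : Bool, ∑ t : Fin n → Bool,
            (|f x - g x| * (∏ i, f (t i)) + g x * |(∏ i, f (t i)) - ∏ i, g (t i)|) :=
          Finset.sum_le_sum fun x _ => Finset.sum_le_sum fun t _ => hbound x t
      _ = (∑ x : Bool, |f x - g x|) * (∑ t : Fin n → Bool, ∏ i, f (t i))
            + (∑ x : Bool, g x) * (∑ t : Fin n → Bool, |(∏ i, f (t i)) - ∏ i, g (t i)|) := by
          simp only [Finset.sum_add_distrib, ← Finset.mul_sum, ← Finset.sum_mul]
      _ ≤ (∑ x : Bool, |f x - g x|) + (n:ℝ) * ∑ x, |f x - g x| := by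
          rw [hsumf, hg1, mul_one, one_mul]
          exact add_le_add le_rfl ih
      _ = (↑(n+1) : ℝ) * ∑ x, |f x - g x| := by push_cast; ring

private noncomputable def wB (p : ℝ) (x : Bool) : ℝ := if x then p else 1 - p

private lemma wB_nonneg {p : ℝ} (hp : p ∈ Set.Icc (0:ℝ) 1) (x : Bool) : 0 ≤ wB p x := by
  cases x <;> simp [wB] <;> [linarith [hp.2]; exact hp.1]

private lemma wB_sum (p : ℝ) : ∑ x : Bool, wB p x = 1 := by simp [wB]

private lemma bern_singleton {p : ℝ} (hp : p ∈ Set.Icc (0:ℝ) 1) (x : Bool) :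
    bern p {x} = ENNReal.ofReal (wB p x) := by
  cases x <;>
    simp [bern, wB, Measure.dirac_apply' _ (measurableSet_singleton _)]

private lemma bern_prob {p : ℝ} (hp : p ∈ Set.Icc (0:ℝ) 1) :
    IsProbabilityMeasure (bern p) := by
  constructor
  have h : (Set.univ : Set Bool) = {true} ∪ {false} := by
    ext x; cases x <;> simp
  rw [h, measure_union (by simp) (measurableSet_singleton _),
    bern_singleton hp, bern_singleton hp]
  rw [← ENNReal.ofReal_add (wB_nonneg hp _) (wB_nonneg hp _)]
  simp [wB]

private lemma bernPow_singleton {p : ℝ} (hp : p ∈ Set.Icc (0:ℝ) 1) (n : ℕ)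
    (s : Fin n → Bool) :
    bernPow p n {s} = ENNReal.ofReal (∏ i, wB p (s i)) := by
  haveI := bern_prob hp
  have h1 : ({s} : Set (Fin n → Bool)) = Set.pi Set.univ (fun i => {s i}) := by
    ext t; simp [funext_iff, Set.mem_pi]
  rw [bernPow, h1, Measure.pi_pi]
  rw [ENNReal.ofReal_prod_of_nonneg (fun i _ => wB_nonneg hp (s i))]
  exact Finset.prod_congr rfl fun i _ => bern_singleton hp (s i)

private lemma bernPow_prob {p : ℝ} (hp : p ∈ Set.Icc (0:ℝ) 1) (n : ℕ) :
    IsProbabilityMeasure (bernPow p n) := by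
  haveI := bern_prob hp
  exact MeasureTheory.Measure.pi.instIsProbabilityMeasure _

private lemma bind_singleton_eq {p : ℝ} (hp : p ∈ Set.Icc (0:ℝ) 1) (n : ℕ)
    (A : (Fin n → Bool) → Measure ℝ) (hAmeas : Measurable A)
    (hAprob : ∀ s, IsProbabilityMeasure (A s)) (S : Set ℝ) (hS : MeasurableSet S) :
    ((bernPow p n).bind A) S
      = ENNReal.ofReal (∑ s : Fin n → Bool, (∏ i, wB p (s i)) * (A s S).toReal) := by
  rw [Measure.bind_apply hS hAmeas.aemeasurable, lintegral_fintype]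
  rw [ENNReal.ofReal_sum_of_nonneg (fun s _ =>
    mul_nonneg (Finset.prod_nonneg fun i _ => wB_nonneg hp (s i)) ENNReal.toReal_nonneg)]
  refine Finset.sum_congr rfl fun s _ => ?_
  have hne : A s S ≠ ⊤ := (measure_ne_top _ _)
  rw [bernPow_singleton hp, ENNReal.ofReal_mul
    (Finset.prod_nonneg fun i _ => wB_nonneg hp (s i)),
    ENNReal.ofReal_toReal hne, mul_comm]

private lemma bind_prob {p : ℝ} (hp : p ∈ Set.Icc (0:ℝ) 1) (n : ℕ)
    (A : (Fin n → Bool) → Measure ℝ) (hAmeas : Measurable A)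
    (hAprob : ∀ s, IsProbabilityMeasure (A s)) :
    IsProbabilityMeasure ((bernPow p n).bind A) := by
  haveI := bernPow_prob hp n
  constructor
  rw [Measure.bind_apply MeasurableSet.univ hAmeas.aemeasurable]
  simp [measure_univ]

private lemma bind_close {p q : ℝ} (hp : p ∈ Set.Icc (0:ℝ) 1) (hq : q ∈ Set.Icc (0:ℝ) 1)
    (n : ℕ) (A : (Fin n → Bool) → Measure ℝ) (hAmeas : Measurable A)
    (hAprob : ∀ s, IsProbabilityMeasure (A s)) (S : Set ℝ) (hS : MeasurableSet S) :
    ((bernPow p n).bind A) S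
      ≤ ((bernPow q n).bind A) S + ENNReal.ofReal ((n:ℝ) * |p - q|) := by
  rw [bind_singleton_eq hp n A hAmeas hAprob S hS,
    bind_singleton_eq hq n A hAmeas hAprob S hS]
  set c : (Fin n → Bool) → ℝ := fun s => (A s S).toReal with hc
  have hc0 : ∀ s, 0 ≤ c s := fun s => ENNReal.toReal_nonneg
  have hc1 : ∀ s, c s ≤ 1 := by
    intro s
    haveI := hAprob s
    have h1 : A s S ≤ 1 := prob_le_one
    have := ENNReal.toReal_mono (by norm_num) h1
    simpa using this
  have hsa : ∑ s : Fin n → Bool, ∏ i, wB p (s i) = 1 := by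
    rw [← Fintype.sum_pow, wB_sum, one_pow]
  have hsb : ∑ s : Fin n → Bool, ∏ i, wB q (s i) = 1 := by
    rw [← Fintype.sum_pow, wB_sum, one_pow]
  have h2 : ∑ x : Bool, |wB p x - wB q x| = 2 * |p - q| := by
    rw [Fintype.sum_bool]
    have e0 : wB p true - wB q true = p - q := by simp [wB]
    have e1 : wB p false - wB q false = -(p - q) := by simp [wB]
    rw [e0, e1, abs_neg]; ring
  have habs : ∑ s : Fin n → Bool, |(∏ i, wB p (s i)) - ∏ i, wB q (s i)|
      ≤ (n:ℝ) * (2 * |p - q|) := by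
    calc ∑ s : Fin n → Bool, |(∏ i, wB p (s i)) - ∏ i, wB q (s i)|
        ≤ (n:ℝ) * ∑ x : Bool, |wB p x - wB q x| :=
          sum_abs_prod_le (wB p) (wB q) (wB_nonneg hp) (wB_nonneg hq)
            (wB_sum p) (wB_sum q) n
      _ = (n:ℝ) * (2 * |p - q|) := by rw [h2]
  have key : ∑ s : Fin n → Bool, (∏ i, wB p (s i)) * c s
      ≤ (∑ s : Fin n → Bool, (∏ i, wB q (s i)) * c s) + (n:ℝ) * |p - q| := by
    have hs := sum_mul_sub_le (fun s => ∏ i, wB p (s i)) (fun s => ∏ i, wB q (s i)) c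
      hc0 hc1 (by rw [hsa, hsb])
    linarith
  calc ENNReal.ofReal (∑ s : Fin n → Bool, (∏ i, wB p (s i)) * c s)
      ≤ ENNReal.ofReal ((∑ s : Fin n → Bool, (∏ i, wB q (s i)) * c s)
          + (n:ℝ) * |p - q|) := ENNReal.ofReal_le_ofReal key
    _ ≤ ENNReal.ofReal (∑ s : Fin n → Bool, (∏ i, wB q (s i)) * c s)
          + ENNReal.ofReal ((n:ℝ) * |p - q|) := ENNReal.ofReal_add_le

theorem stmt17 (n m : ℕ) (b : Fin m → ℝ) (hb : ∀ i, b i ∈ Set.Icc (0 : ℝ) 1)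
    (hmono : ∀ i j : Fin m, i < j → b i < b j)
    (η : ℝ) (hη : 0 ≤ η)
    (hgap : ∀ (i : ℕ) (h : i + 1 < m), b ⟨i + 1, h⟩ - b ⟨i, Nat.lt_of_succ_lt h⟩ ≤ η)
    (hnη : (n : ℝ) * η < 1 / 3)
    (A : (Fin n → Bool) → Measure ℝ) (hAmeas : Measurable A)
    (hAprob : ∀ s, IsProbabilityMeasure (A s))
    (v : Fin m → ℝ)
    (hcanon : ∀ i : Fin m, (2 / 3 : ℝ≥0∞) ≤ ((bernPow (b i) n).bind A) {v i}) :
    (∀ (i : ℕ) (h : i + 1 < m), v ⟨i, Nat.lt_of_succ_lt h⟩ = v ⟨i + 1, h⟩) ∧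
      ∀ i j : Fin m, v i = v j := by
  have adj : ∀ (i : ℕ) (h : i + 1 < m), v ⟨i, Nat.lt_of_succ_lt h⟩ = v ⟨i + 1, h⟩ := by
    intro i h
    by_contra hne
    set i0 : Fin m := ⟨i, Nat.lt_of_succ_lt h⟩ with hi0
    set i1 : Fin m := ⟨i + 1, h⟩ with hi1
    set Q := (bernPow (b i1) n).bind A with hQ
    haveI hQprob : IsProbabilityMeasure Q := bind_prob (hb i1) n A hAmeas hAprob
    have h1 : (2 / 3 : ℝ≥0∞) ≤ Q {v i1} := hcanon i1
    have hlt01 : b i0 < b i1 := hmono i0 i1 (by simp [hi0, hi1, Fin.lt_def])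
    have habsle : |b i0 - b i1| ≤ η := by
      rw [abs_sub_comm, abs_of_nonneg (by linarith)]
      exact hgap i h
    have h2 : (2 / 3 : ℝ≥0∞) ≤ Q {v i0} + ENNReal.ofReal ((n:ℝ) * η) := by
      refine (hcanon i0).trans ?_
      refine (bind_close (hb i0) (hb i1) n A hAmeas hAprob {v i0}
        (measurableSet_singleton _)).trans ?_
      exact add_le_add_right (ENNReal.ofReal_le_ofReal
        (mul_le_mul_of_nonneg_left habsle (Nat.cast_nonneg n))) _
    have hdisj : Q {v i0} + Q {v i1} ≤ 1 := by
      rw [← measure_union (Set.disjoint_singleton.2 hne) (measurableSet_singleton _)]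
      exact prob_le_one
    have hmain : (2 / 3 : ℝ≥0∞) + 2 / 3 ≤ 1 + ENNReal.ofReal ((n:ℝ) * η) := by
      calc (2 / 3 : ℝ≥0∞) + 2 / 3
          ≤ (Q {v i0} + ENNReal.ofReal ((n:ℝ) * η)) + Q {v i1} := add_le_add h2 h1
        _ = (Q {v i0} + Q {v i1}) + ENNReal.ofReal ((n:ℝ) * η) := by ring
        _ ≤ 1 + ENNReal.ofReal ((n:ℝ) * η) := add_le_add_left hdisj _
    have e13 : ENNReal.ofReal ((1:ℝ) / 3) = 1 / 3 := by
      rw [ENNReal.ofReal_div_of_pos (by norm_num), ENNReal.ofReal_one,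
        ENNReal.ofReal_ofNat]
    have hsmall : ENNReal.ofReal ((n:ℝ) * η) < 1 / 3 := by
      rw [← e13]
      exact (ENNReal.ofReal_lt_ofReal_iff (by norm_num)).2 hnη
    have hfin : (2 / 3 : ℝ≥0∞) + 2 / 3 < 1 + 1 / 3 :=
      hmain.trans_lt (ENNReal.add_lt_add_left one_ne_top hsmall)
    have h43 : (2 / 3 : ℝ≥0∞) + 2 / 3 = 4 / 3 := by
      rw [ENNReal.div_add_div_same]
      norm_num
    have h43' : (1 : ℝ≥0∞) + 1 / 3 = 4 / 3 := by
      nth_rewrite 1 [show (1 : ℝ≥0∞) = 3 / 3 from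
        (ENNReal.div_self (by norm_num) (by norm_num)).symm]
      rw [ENNReal.div_add_div_same]
      norm_num
    rw [h43, h43'] at hfin
    exact lt_irrefl _ hfin
  refine ⟨adj, ?_⟩
  have hzero : ∀ (k : ℕ) (hk : k < m),
      v ⟨k, hk⟩ = v ⟨0, Nat.lt_of_le_of_lt (Nat.zero_le _) hk⟩ := by
    intro k
    induction k with
    | zero => intro hk; rfl
    | succ k ih =>
      intro hk
      rw [← adj k hk, ih (Nat.lt_of_succ_lt hk)]
  intro i j
  have hi := hzero i.1 i.2
  have hj := hzero j.1 j.2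
  simp only [Fin.eta] at hi hj
  rw [hi, hj]
end
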